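/- Let M be a measurement assemblage in dimension d with m settings and o outcomes, p a weighting, and ρ a density matrix on Fin d × Fin d. Define σ x a = Tr₁[(M x a ⊗ₖ 1) ρ]. Then σ is a state assemblage and its steerability is bounded by the incompatibility of M: S(σ,p) ≤ I⋄(M,p). -/

import Mathlib

open Matrix Kronecker BigOperators ComplexOrder

noncomputable section

def IsDensityMatrix {n : Type*} [Fintype n] [DecidableEq n] (ρ : Matrix n n ℂ) : Prop :=
  ρ.PosSemidef ∧ ρ.trace = 1

noncomputable def traceNorm {n : Type*} [Fintype n] [DecidableEq n] (X : Matrix n n ℂ) : ℝ :=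
  (((Matrix.posSemidef_conjTranspose_mul_self X).1.eigenvectorUnitary : Matrix n n ℂ) *
      diagonal (((↑) : ℝ → ℂ) ∘ Real.sqrt ∘ (Matrix.posSemidef_conjTranspose_mul_self X).1.eigenvalues) *
      (star (Matrix.posSemidef_conjTranspose_mul_self X).1.eigenvectorUnitary : Matrix n n ℂ)).trace.re

noncomputable def specNorm {n : Type*} [Fintype n] [DecidableEq n] (X : Matrix n n ℂ) : ℝ :=
  ‖Matrix.toEuclideanCLM (𝕜 := ℂ) X‖

def ptrace1 {n e : Type*} [Fintype n] (ρ : Matrix (n × e) (n × e) ℂ) : Matrix e e ℂ :=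
  Matrix.of fun j j' => ∑ i, ρ (i, j) (i, j')

def IsAssemblage {d m o : ℕ} (M : Fin m → Fin o → Matrix (Fin d) (Fin d) ℂ) : Prop :=
  (∀ x a, (M x a).PosSemidef) ∧ ∀ x, ∑ a, M x a = 1

def IsWeighting {m : ℕ} (p : Fin m → ℝ) : Prop :=
  (∀ x, 0 < p x) ∧ ∑ x, p x = 1

noncomputable def Ddiamond {d m o : ℕ} (p : Fin m → ℝ)
    (M N : Fin m → Fin o → Matrix (Fin d) (Fin d) ℂ) : ℝ :=
  (1 / 2) * ∑ x, p x *
    ⨆ ρ : {ρ : Matrix (Fin d × Fin d) (Fin d × Fin d) ℂ // IsDensityMatrix ρ},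
      ∑ a, traceNorm (ptrace1 (((M x a - N x a) ⊗ₖ (1 : Matrix (Fin d) (Fin d) ℂ)) * ρ.1))

def JointlyMeasurable {d m o : ℕ} (F : Fin m → Fin o → Matrix (Fin d) (Fin d) ℂ) : Prop :=
  ∃ G : (Fin m → Fin o) → Matrix (Fin d) (Fin d) ℂ,
    (∀ lam, (G lam).PosSemidef) ∧ (∑ lam, G lam = 1) ∧
    ∀ x a, F x a = ∑ lam ∈ Finset.univ.filter (fun lam => lam x = a), G lam

noncomputable def Incomp {d m o : ℕ} (p : Fin m → ℝ)
    (M : Fin m → Fin o → Matrix (Fin d) (Fin d) ℂ) : ℝ :=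
  ⨅ F : {F : Fin m → Fin o → Matrix (Fin d) (Fin d) ℂ // IsAssemblage F ∧ JointlyMeasurable F},
    Ddiamond p M F.1


def IsStateAssemblage {d m o : ℕ} (σ : Fin m → Fin o → Matrix (Fin d) (Fin d) ℂ) : Prop :=
  (∀ x a, (σ x a).PosSemidef) ∧ ∀ x, ∑ a, (σ x a).trace = 1

def HasLHSModel {d m o : ℕ} (σ : Fin m → Fin o → Matrix (Fin d) (Fin d) ℂ) : Prop :=
  ∃ σ' : (Fin m → Fin o) → Matrix (Fin d) (Fin d) ℂ,
    (∀ lam, (σ' lam).PosSemidef) ∧ (∑ lam, (σ' lam).trace = 1) ∧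
    ∀ x a, σ x a = ∑ lam ∈ Finset.univ.filter (fun lam => lam x = a), σ' lam

noncomputable def Steerability {d m o : ℕ} (p : Fin m → ℝ)
    (σ : Fin m → Fin o → Matrix (Fin d) (Fin d) ℂ) : ℝ :=
  ⨅ τ : {τ : Fin m → Fin o → Matrix (Fin d) (Fin d) ℂ // IsStateAssemblage τ ∧ HasLHSModel τ},
    (1 / 2) * ∑ x, p x * ∑ a, traceNorm (σ x a - τ.1 x a)

/-! Measuring `A` on the first half of `ρ` is the positive linear map `A ↦ Tr₁[(A ⊗ 1) ρ]`
(positive because `A = BᴴB` and `Tr₁` is cyclic in operators on the first factor). Sending a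
jointly measurable `F` with parent measurement `G` through this map yields an LHS model whose
hidden states are the images of the `G λ`, and its distance to the steered assemblage is the
diamond-distance integrand evaluated at the particular state `ρ`, hence at most the supremum. -/

open scoped MatrixOrder

section PartialTrace

variable {n e : Type*} [Fintype n]

lemma trace_ptrace1 [Fintype e] (X : Matrix (n × e) (n × e) ℂ) :
    (ptrace1 X).trace = X.trace := by
  simp only [trace, diag, ptrace1, of_apply, Fintype.sum_prod_type]
  exact Finset.sum_comm

lemma ptrace1_eq_sum_submatrix (X : Matrix (n × e) (n × e) ℂ) :
    ptrace1 X = ∑ i, X.submatrix (Prod.mk i) (Prod.mk i) := by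
  ext j j'
  simp [ptrace1, Matrix.sum_apply]

lemma Matrix.PosSemidef.ptrace1 {X : Matrix (n × e) (n × e) ℂ} (hX : X.PosSemidef) :
    (_root_.ptrace1 X).PosSemidef := by
  rw [ptrace1_eq_sum_submatrix]
  exact posSemidef_sum _ fun i _ => hX.submatrix _

lemma ptrace1_kronecker_one_mul_comm [Fintype e] [DecidableEq e] (B : Matrix n n ℂ)
    (X : Matrix (n × e) (n × e) ℂ) :
    ptrace1 ((B ⊗ₖ (1 : Matrix e e ℂ)) * X) = ptrace1 (X * (B ⊗ₖ (1 : Matrix e e ℂ))) := by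
  ext j j'
  simp only [ptrace1, of_apply, mul_apply, Fintype.sum_prod_type, kroneckerMap_apply, one_apply,
    mul_ite, mul_one, mul_zero, ite_mul, zero_mul, Finset.sum_ite_eq, Finset.sum_ite_eq',
    Finset.mem_univ, if_true]
  rw [Finset.sum_comm]
  simp only [mul_comm]

end PartialTrace

section Steering

variable {n e : Type*} [Fintype n] [Fintype e] [DecidableEq e]

def steeringMap (ρ : Matrix (n × e) (n × e) ℂ) : Matrix n n ℂ →ₗ[ℂ] Matrix e e ℂ where
  toFun A := ptrace1 ((A ⊗ₖ (1 : Matrix e e ℂ)) * ρ)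
  map_add' A B := by
    ext j j'
    simp [ptrace1, add_kronecker, add_mul, Finset.sum_add_distrib]
  map_smul' c A := by
    ext j j'
    simp [ptrace1, smul_kronecker, Finset.mul_sum]

lemma steeringMap_apply (ρ : Matrix (n × e) (n × e) ℂ) (A : Matrix n n ℂ) :
    steeringMap ρ A = ptrace1 ((A ⊗ₖ (1 : Matrix e e ℂ)) * ρ) := rfl

lemma Matrix.PosSemidef.steeringMap [DecidableEq n] {A : Matrix n n ℂ}
    {ρ : Matrix (n × e) (n × e) ℂ} (hA : A.PosSemidef) (hρ : ρ.PosSemidef) :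
    (steeringMap ρ A).PosSemidef := by
  obtain ⟨B, rfl⟩ := CStarAlgebra.nonneg_iff_eq_star_mul_self.mp hA.nonneg
  have hsplit : ((star B * B) ⊗ₖ (1 : Matrix e e ℂ)) * ρ
      = (Bᴴ ⊗ₖ (1 : Matrix e e ℂ)) * ((B ⊗ₖ (1 : Matrix e e ℂ)) * ρ) := by
    rw [← mul_assoc, ← mul_kronecker_mul, one_mul, star_eq_conjTranspose]
  rw [steeringMap_apply, hsplit, ptrace1_kronecker_one_mul_comm]
  simpa only [conjTranspose_kronecker, conjTranspose_one] using
    (hρ.mul_mul_conjTranspose_same (B ⊗ₖ (1 : Matrix e e ℂ))).ptrace1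

lemma sum_trace_steeringMap_eq_one [DecidableEq n] {ι : Type*} [Fintype ι]
    {ρ : Matrix (n × e) (n × e) ℂ} (hρ : ρ.trace = 1) {A : ι → Matrix n n ℂ} (hA : ∑ i, A i = 1) :
    ∑ i, (steeringMap ρ (A i)).trace = 1 := by
  rw [← trace_sum, ← map_sum, hA, steeringMap_apply, trace_ptrace1, one_kronecker_one, one_mul, hρ]

end Steering

section TraceNorm

variable {m n : Type*} [Fintype m] [Fintype n] [DecidableEq n]

lemma traceNorm_eq_trace_sqrt (X : Matrix n n ℂ) :
    traceNorm X = (CFC.sqrt (Xᴴ * X)).trace.re := by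
  have hX := posSemidef_conjTranspose_mul_self X
  rw [traceNorm, CFC.sqrt_eq_real_sqrt _ hX.nonneg, cfcₙ_eq_cfc, hX.1.cfc_eq]
  rfl

lemma traceNorm_nonneg (X : Matrix n n ℂ) : 0 ≤ traceNorm X := by
  rw [traceNorm_eq_trace_sqrt]
  exact (Complex.le_def.mp (CFC.sqrt_nonneg (Xᴴ * X)).posSemidef.trace_nonneg).1

omit [Fintype n] [DecidableEq n] in
lemma re_conjTranspose_mul_self_apply (A : Matrix m n ℂ) (j : n) :
    ((Aᴴ * A) j j).re = ∑ i, ‖A i j‖ ^ 2 := by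
  simp [mul_apply, Complex.re_sum, Complex.sq_norm, Complex.normSq_apply]

lemma traceNorm_le_sum_norm (X : Matrix n n ℂ) : traceNorm X ≤ ∑ i, ∑ j, ‖X i j‖ := by
  set S := CFC.sqrt (Xᴴ * X)
  have hSS : Sᴴ * S = Xᴴ * X := by
    rw [(CFC.sqrt_nonneg (Xᴴ * X)).posSemidef.1.eq]
    exact CFC.sqrt_mul_sqrt_self _ (posSemidef_conjTranspose_mul_self X).nonneg
  rw [traceNorm_eq_trace_sqrt, trace, Complex.re_sum, Finset.sum_comm]
  refine Finset.sum_le_sum fun j _ => ?_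
  calc (S j j).re ≤ ‖S j j‖ := Complex.re_le_norm _
    _ ≤ √(∑ i, ‖S i j‖ ^ 2) := Real.le_sqrt_of_sq_le <|
        Finset.single_le_sum (f := fun i => ‖S i j‖ ^ 2) (fun _ _ => by positivity)
          (Finset.mem_univ j)
    _ = √(∑ i, ‖X i j‖ ^ 2) := by
        rw [← re_conjTranspose_mul_self_apply, hSS, re_conjTranspose_mul_self_apply]
    _ ≤ ∑ i, ‖X i j‖ := Real.sqrt_le_iff.mpr
        ⟨by positivity, Finset.sum_sq_le_sq_sum_of_nonneg fun _ _ => norm_nonneg _⟩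

end TraceNorm

lemma Matrix.PosSemidef.norm_apply_sq_le {n : Type*} {A : Matrix n n ℂ} (hA : A.PosSemidef)
    (i j : n) : ‖A i j‖ ^ 2 ≤ (A i i).re * (A j j).re := by
  have hdet := (hA.submatrix ![i, j]).det_nonneg
  rw [det_fin_two] at hdet
  simp only [submatrix_apply, Matrix.cons_val_zero, Matrix.cons_val_one] at hdet
  rw [← hA.1.apply j i, RCLike.star_def, Complex.mul_conj'] at hdet
  have hii : (A i i).im = 0 := (Complex.le_def.mp hA.diag_nonneg).2.symm
  simpa [hii, ← Complex.ofReal_pow] using (Complex.le_def.mp hdet).1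

section Density

variable {n : Type*} [Fintype n] [DecidableEq n]

lemma IsDensityMatrix.nonempty {ρ : Matrix n n ℂ} (hρ : IsDensityMatrix ρ) : Nonempty n := by
  by_contra h
  have := not_nonempty_iff.mp h
  simpa [trace] using hρ.2

lemma IsDensityMatrix.norm_apply_le_one {ρ : Matrix n n ℂ} (hρ : IsDensityMatrix ρ) (i j : n) :
    ‖ρ i j‖ ≤ 1 := by
  have hdiag_nonneg (k : n) : 0 ≤ (ρ k k).re := (Complex.le_def.mp hρ.1.diag_nonneg).1
  have hdiag_le_one (k : n) : (ρ k k).re ≤ 1 := by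
    have htrace : ∑ k, (ρ k k).re = 1 := by
      simpa [trace, Complex.re_sum] using congrArg Complex.re hρ.2
    rw [← htrace]
    exact Finset.single_le_sum (fun k _ => hdiag_nonneg k) (Finset.mem_univ k)
  refine (sq_le_one_iff₀ (norm_nonneg _)).mp ((hρ.1.norm_apply_sq_le i j).trans ?_)
  exact mul_le_one₀ (hdiag_le_one i) (hdiag_nonneg j) (hdiag_le_one j)

end Density

section SteeringBounds

variable {n e : Type*} [Fintype n] [Fintype e] [DecidableEq n] [DecidableEq e]

lemma norm_steeringMap_apply_le {ρ : Matrix (n × e) (n × e) ℂ} (hρ : IsDensityMatrix ρ)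
    (A : Matrix n n ℂ) (j j' : e) : ‖steeringMap ρ A j j'‖ ≤ ∑ i, ∑ k, ‖A i k‖ := by
  have hentry : steeringMap ρ A j j' = ∑ i, ∑ k, A i k * ρ (k, j) (i, j') := by
    simp only [steeringMap_apply, ptrace1, of_apply, mul_apply, Fintype.sum_prod_type,
      kroneckerMap_apply, one_apply, mul_ite, mul_one, mul_zero, ite_mul, zero_mul,
      Finset.sum_ite_eq, Finset.mem_univ, if_true]
  rw [hentry]
  refine (norm_sum_le _ _).trans (Finset.sum_le_sum fun i _ => (norm_sum_le _ _).trans ?_)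
  refine Finset.sum_le_sum fun k _ => ?_
  rw [norm_mul]
  exact mul_le_of_le_one_right (norm_nonneg _) (hρ.norm_apply_le_one _ _)

lemma traceNorm_steeringMap_le {ρ : Matrix (n × e) (n × e) ℂ} (hρ : IsDensityMatrix ρ)
    (A : Matrix n n ℂ) :
    traceNorm (steeringMap ρ A) ≤ Fintype.card e ^ 2 * ∑ i, ∑ k, ‖A i k‖ := by
  refine (traceNorm_le_sum_norm _).trans ?_
  calc ∑ j, ∑ j', ‖steeringMap ρ A j j'‖ ≤ ∑ _j : e, ∑ _j' : e, ∑ i, ∑ k, ‖A i k‖ := by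
        gcongr with j _ j' _
        exact norm_steeringMap_apply_le hρ A j j'
    _ = Fintype.card e ^ 2 * ∑ i, ∑ k, ‖A i k‖ := by
        simp [Finset.sum_const, Finset.card_univ, sq, mul_assoc]

lemma bddAbove_sum_traceNorm_steeringMap {ι : Type*} [Fintype ι] (A : ι → Matrix n n ℂ) :
    BddAbove (Set.range fun ρ : {ρ : Matrix (n × e) (n × e) ℂ // IsDensityMatrix ρ} =>
      ∑ a, traceNorm (steeringMap ρ.1 (A a))) := by
  refine ⟨∑ a, Fintype.card e ^ 2 * ∑ i, ∑ k, ‖A a i k‖, ?_⟩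
  rintro _ ⟨ρ, rfl⟩
  exact Finset.sum_le_sum fun a _ => traceNorm_steeringMap_le ρ.2 (A a)

end SteeringBounds

section Assemblages

variable {d m o : ℕ}

lemma IsAssemblage.isStateAssemblage_steeringMap {M : Fin m → Fin o → Matrix (Fin d) (Fin d) ℂ}
    (hM : IsAssemblage M) {ρ : Matrix (Fin d × Fin d) (Fin d × Fin d) ℂ}
    (hρ : IsDensityMatrix ρ) : IsStateAssemblage fun x a => steeringMap ρ (M x a) :=
  ⟨fun x a => (hM.1 x a).steeringMap hρ.1, fun x => sum_trace_steeringMap_eq_one hρ.2 (hM.2 x)⟩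

lemma JointlyMeasurable.hasLHSModel_steeringMap {F : Fin m → Fin o → Matrix (Fin d) (Fin d) ℂ}
    (hF : JointlyMeasurable F) {ρ : Matrix (Fin d × Fin d) (Fin d × Fin d) ℂ}
    (hρ : IsDensityMatrix ρ) : HasLHSModel fun x a => steeringMap ρ (F x a) := by
  obtain ⟨G, hG, hGsum, hFG⟩ := hF
  exact ⟨fun lam => steeringMap ρ (G lam), fun lam => (hG lam).steeringMap hρ.1,
    sum_trace_steeringMap_eq_one hρ.2 hGsum,
    fun x a => (congrArg (steeringMap ρ) (hFG x a)).trans (map_sum _ _ _)⟩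

lemma JointlyMeasurable.isAssemblage {F : Fin m → Fin o → Matrix (Fin d) (Fin d) ℂ}
    (hF : JointlyMeasurable F) : IsAssemblage F := by
  obtain ⟨G, hG, hGsum, hFG⟩ := hF
  refine ⟨fun x a => hFG x a ▸ posSemidef_sum _ fun lam _ => hG lam, fun x => ?_⟩
  simp only [hFG]
  rw [Finset.sum_fiberwise, hGsum]

lemma IsAssemblage.nonempty_fun [Nonempty (Fin d)]
    {M : Fin m → Fin o → Matrix (Fin d) (Fin d) ℂ} (hM : IsAssemblage M) :
    Nonempty (Fin m → Fin o) := by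
  rcases isEmpty_or_nonempty (Fin o) with _ | ⟨⟨a⟩⟩
  · -- with no outcomes `∑ a, M x a = 0 ≠ 1`, so there are no settings either
    exact ⟨fun x => absurd (hM.2 x) (by simp)⟩
  · exact ⟨fun _ => a⟩

lemma nonempty_jointlyMeasurable [Nonempty (Fin m → Fin o)] :
    Nonempty {F : Fin m → Fin o → Matrix (Fin d) (Fin d) ℂ //
      IsAssemblage F ∧ JointlyMeasurable F} := by
  obtain ⟨lam₀⟩ := ‹Nonempty (Fin m → Fin o)›
  let G : (Fin m → Fin o) → Matrix (Fin d) (Fin d) ℂ := Pi.single lam₀ 1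
  have hG : ∀ lam, (G lam).PosSemidef := fun lam => by
    rcases eq_or_ne lam lam₀ with rfl | h
    · simpa [G] using PosSemidef.one
    · simpa [G, h] using PosSemidef.zero
  have hF : JointlyMeasurable fun x a =>
      ∑ lam ∈ Finset.univ.filter (fun lam => lam x = a), G lam :=
    ⟨G, hG, by simp [G], fun _ _ => rfl⟩
  exact ⟨⟨_, hF.isAssemblage, hF⟩⟩

end Assemblages

lemma steerability_le_of_hasLHSModel {d m o : ℕ} {p : Fin m → ℝ} (hp : ∀ x, 0 ≤ p x)
    (σ τ : Fin m → Fin o → Matrix (Fin d) (Fin d) ℂ)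
    (hτ : IsStateAssemblage τ ∧ HasLHSModel τ) :
    Steerability p σ ≤ (1 / 2) * ∑ x, p x * ∑ a, traceNorm (σ x a - τ x a) := by
  have hbdd : BddBelow (Set.range fun τ' : {τ' : Fin m → Fin o → Matrix (Fin d) (Fin d) ℂ //
      IsStateAssemblage τ' ∧ HasLHSModel τ'} =>
        (1 / 2) * ∑ x, p x * ∑ a, traceNorm (σ x a - τ'.1 x a)) := by
    refine ⟨0, ?_⟩
    rintro _ ⟨τ', rfl⟩
    exact mul_nonneg (by norm_num) <| Finset.sum_nonneg fun x _ =>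
      mul_nonneg (hp x) (Finset.sum_nonneg fun a _ => traceNorm_nonneg _)
  exact ciInf_le hbdd ⟨τ, hτ⟩

lemma sum_traceNorm_sub_steeringMap_le_Ddiamond {d m o : ℕ} {p : Fin m → ℝ}
    (hp : ∀ x, 0 ≤ p x) {ρ : Matrix (Fin d × Fin d) (Fin d × Fin d) ℂ} (hρ : IsDensityMatrix ρ)
    (M N : Fin m → Fin o → Matrix (Fin d) (Fin d) ℂ) :
    (1 / 2) * ∑ x, p x * ∑ a, traceNorm (steeringMap ρ (M x a) - steeringMap ρ (N x a))
      ≤ Ddiamond p M N := by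
  unfold Ddiamond
  refine mul_le_mul_of_nonneg_left (Finset.sum_le_sum fun x _ =>
    mul_le_mul_of_nonneg_left ?_ (hp x)) (by norm_num)
  simp_rw [← map_sub]
  exact le_ciSup (bddAbove_sum_traceNorm_steeringMap fun a => M x a - N x a) ⟨ρ, hρ⟩

/-- The steerability of the state assemblage obtained by performing the measurements of `M`
on one half of a bipartite state `ρ` is bounded by the incompatibility of `M`. -/
theorem steerability_le_incompatibility {d m o : ℕ}
    (M : Fin m → Fin o → Matrix (Fin d) (Fin d) ℂ) (hM : IsAssemblage M)
    (p : Fin m → ℝ) (hp : IsWeighting p)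
    (ρ : Matrix (Fin d × Fin d) (Fin d × Fin d) ℂ) (hρ : IsDensityMatrix ρ) :
    IsStateAssemblage (fun x a => ptrace1 (((M x a) ⊗ₖ (1 : Matrix (Fin d) (Fin d) ℂ)) * ρ)) ∧
    Steerability p (fun x a => ptrace1 (((M x a) ⊗ₖ (1 : Matrix (Fin d) (Fin d) ℂ)) * ρ))
      ≤ Incomp p M := by
  have hp_nonneg x : 0 ≤ p x := (hp.1 x).le
  have : Nonempty (Fin d) := hρ.nonempty.map Prod.fst
  have := hM.nonempty_fun
  have := nonempty_jointlyMeasurable (d := d) (m := m) (o := o)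
  refine ⟨hM.isStateAssemblage_steeringMap hρ, le_ciInf fun F => ?_⟩
  calc Steerability p (fun x a => steeringMap ρ (M x a))
      ≤ (1 / 2) * ∑ x, p x * ∑ a, traceNorm (steeringMap ρ (M x a) - steeringMap ρ (F.1 x a)) :=
        steerability_le_of_hasLHSModel hp_nonneg _ _
          ⟨F.2.1.isStateAssemblage_steeringMap hρ, F.2.2.hasLHSModel_steeringMap hρ⟩
    _ ≤ Ddiamond p M F.1 := sum_traceNorm_sub_steeringMap_le_Ddiamond hp_nonneg hρ M F.1

end
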